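/- arXiv:1705.08155 — 2 statements merged into one kernel-verified Lean document; each statement's English description precedes it below -/
import Mathlib

section
/- Orthogonal case: with κ = N/2 − 1 and R(u) = 1 − P/u + Q/(u−κ), the operator R(1) is unchanged under multiplication from the left or from the right by (1 − P)/2 + Q/N, i.e., ((1−P)/2 + Q/N)·R(1) = R(1) and R(1)·((1−P)/2 + Q/N) = R(1). -/
open Matrix

def flipP (N : ℕ) : Matrix (Fin N × Fin N) (Fin N × Fin N) ℂ :=
  Matrix.of fun p q => if p.1 = q.2 ∧ p.2 = q.1 then 1 else 0

def QOrth (N : ℕ) : Matrix (Fin N × Fin N) (Fin N × Fin N) ℂ :=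
  Matrix.of fun p q => if p.2 = p.1.rev ∧ q.2 = q.1.rev then 1 else 0

noncomputable def kOrth (N : ℕ) : ℂ := (N : ℂ) / 2 - 1

noncomputable def R1Orth (N : ℕ) : Matrix (Fin N × Fin N) (Fin N × Fin N) ℂ :=
  1 - flipP N + (1 - kOrth N)⁻¹ • QOrth N

lemma flipP_apply (N : ℕ) (p q : Fin N × Fin N) :
    flipP N p q = if q = (p.2, p.1) then 1 else 0 := by
  simp [flipP, Prod.ext_iff, eq_comm, and_comm]

lemma flipP_apply' (N : ℕ) (p q : Fin N × Fin N) :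
    flipP N p q = if p = (q.2, q.1) then 1 else 0 := by
  simp [flipP, Prod.ext_iff]

lemma QOrth_apply (N : ℕ) (p q : Fin N × Fin N) :
    QOrth N p q = (if p.2 = p.1.rev then 1 else 0) * (if q.2 = q.1.rev then 1 else 0) := by
  by_cases h1 : p.2 = p.1.rev <;> by_cases h2 : q.2 = q.1.rev <;> simp [QOrth, h1, h2]

lemma rev_comm {N : ℕ} (a b : Fin N) : a = b.rev ↔ b = a.rev := by
  constructor <;> intro h <;> simp [h]

lemma flipP_mul_flipP (N : ℕ) : flipP N * flipP N = 1 := by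
  ext p q
  simp only [Matrix.mul_apply, flipP_apply, ite_mul, one_mul, zero_mul,
    Finset.sum_ite_eq', Finset.mem_univ, if_true, flipP_apply, Matrix.one_apply]
  congr 1
  simp [Prod.ext_iff, and_comm, eq_comm]

lemma flipP_mul_QOrth (N : ℕ) : flipP N * QOrth N = QOrth N := by
  ext p q
  simp only [Matrix.mul_apply, flipP_apply, QOrth_apply, ite_mul, one_mul, zero_mul,
    Finset.sum_ite_eq', Finset.mem_univ, if_true]
  simp only [rev_comm p.1 p.2]

lemma QOrth_mul_flipP (N : ℕ) : QOrth N * flipP N = QOrth N := by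
  ext p q
  simp only [Matrix.mul_apply, flipP_apply', QOrth_apply, mul_ite, mul_one, mul_zero,
    Finset.sum_ite_eq', Finset.mem_univ, if_true]
  simp only [rev_comm q.1 q.2]

lemma QOrth_mul_QOrth (N : ℕ) : QOrth N * QOrth N = (N : ℂ) • QOrth N := by
  ext p q
  simp only [Matrix.mul_apply, QOrth_apply, Matrix.smul_apply, smul_eq_mul]
  have h : ∀ r : Fin N × Fin N,
      (if p.2 = p.1.rev then (1:ℂ) else 0) * (if r.2 = r.1.rev then 1 else 0) *
        ((if r.2 = r.1.rev then (1:ℂ) else 0) * (if q.2 = q.1.rev then 1 else 0)) =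
      (if r.2 = r.1.rev then (1:ℂ) else 0) *
        ((if p.2 = p.1.rev then (1:ℂ) else 0) * (if q.2 = q.1.rev then 1 else 0)) := by
    intro r; by_cases h : r.2 = r.1.rev <;> simp [h]
  rw [Finset.sum_congr rfl fun r _ => h r, ← Finset.sum_mul]
  congr 1
  rw [Fintype.sum_prod_type]
  simp

/-- `R(1)` is unchanged under left or right multiplication by `(1-P)/2 + Q/N`. -/
theorem R1Orth_projector (N : ℕ) (hN : 3 ≤ N) (hN4 : N ≠ 4) :
    ((2 : ℂ)⁻¹ • (1 - flipP N) + ((N : ℂ))⁻¹ • QOrth N) * R1Orth N = R1Orth N ∧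
    R1Orth N * ((2 : ℂ)⁻¹ • (1 - flipP N) + ((N : ℂ))⁻¹ • QOrth N) = R1Orth N := by
  have hNC : (N : ℂ) ≠ 0 := Nat.cast_ne_zero.mpr (by omega)
  have hXX : (1 - flipP N) * (1 - flipP N) = (2 : ℂ) • (1 - flipP N) := by
    rw [sub_mul, mul_sub, mul_sub, flipP_mul_flipP, mul_one, mul_one, one_mul]
    module
  have hXQ : (1 - flipP N) * QOrth N = 0 := by
    rw [sub_mul, one_mul, flipP_mul_QOrth, sub_self]
  have hQX : QOrth N * (1 - flipP N) = 0 := by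
    rw [mul_sub, mul_one, QOrth_mul_flipP, sub_self]
  have hQQ := QOrth_mul_QOrth N
  have hR : R1Orth N = (1 - flipP N) + (1 - kOrth N)⁻¹ • QOrth N := rfl
  rw [hR]
  constructor
  · simp only [add_mul, mul_add, smul_mul_assoc, mul_smul_comm, hXX, hXQ, hQX, hQQ,
      smul_zero, add_zero, zero_add, smul_smul]
    match_scalars <;> field_simp
  · simp only [add_mul, mul_add, smul_mul_assoc, mul_smul_comm, hXX, hXQ, hQX, hQQ,
      smul_zero, add_zero, zero_add, smul_smul]
    match_scalars <;> field_simp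
end

section
/- Symplectic case: with N = 2n, κ = N/2 + 1 and R(u) = 1 − P/u + Q/(u−κ), the operator R(1) satisfies ((1 − P)/2)·R(1) = R(1) and R(1)·((1 − P)/2) = R(1). -/
/-! The flip `P` is an involution, and `ε_{i'} = -ε_i` gives `P Q = -Q`; hence `P R(1) = -R(1)`.
Since `P` and `Q`, hence `R(1)`, are symmetric, transposing gives `R(1) P = -R(1)` as well.
Finally, any `x` with `P x = -x` satisfies `(1 - P)/2 · x = (x + x)/2 = x`, and symmetrically on
the right. -/

open Matrix

def epsSymp (n : ℕ) (i : Fin (2 * n)) : ℂ := if (i : ℕ) < n then 1 else -1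

def QSymp (n : ℕ) : Matrix (Fin (2 * n) × Fin (2 * n)) (Fin (2 * n) × Fin (2 * n)) ℂ :=
  Matrix.of fun p q =>
    if p.2 = p.1.rev ∧ q.2 = q.1.rev then epsSymp n p.1 * epsSymp n q.1 else 0

/-- `κ = N/2 + 1 = n + 1` in the symplectic case, `N = 2n`. -/
noncomputable def kSymp (n : ℕ) : ℂ := (n : ℂ) + 1

/-- `R(1) = 1 - P + Q/(1 - κ)` in the symplectic case. -/
noncomputable def R1Symp (n : ℕ) : Matrix (Fin (2 * n) × Fin (2 * n)) (Fin (2 * n) × Fin (2 * n)) ℂ :=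
  1 - flipP (2 * n) + (1 - kSymp n)⁻¹ • QSymp n

section HalfOneSub

variable {K A : Type*} [Field K] [NeZero (2 : K)] [Ring A] [Algebra K A]

theorem half_one_sub_mul_of_mul_eq_neg {P x : A} (h : P * x = -x) :
    ((2 : K)⁻¹ • (1 - P)) * x = x := by
  rw [smul_mul_assoc, sub_mul, one_mul, h, sub_neg_eq_add, ← two_smul K, smul_smul,
    inv_mul_cancel₀ (NeZero.ne 2), one_smul]

theorem mul_half_one_sub_of_mul_eq_neg {P x : A} (h : x * P = -x) :
    x * ((2 : K)⁻¹ • (1 - P)) = x := by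
  rw [mul_smul_comm, mul_sub, mul_one, h, sub_neg_eq_add, ← two_smul K, smul_smul,
    inv_mul_cancel₀ (NeZero.ne 2), one_smul]

end HalfOneSub

section Flip

variable {N : ℕ}

theorem flipP_eq_one_submatrix :
    flipP N = (1 : Matrix (Fin N × Fin N) (Fin N × Fin N) ℂ).submatrix id Prod.swap := by
  ext p q
  simp [flipP, one_apply, Prod.ext_iff]

theorem flipP_mul (M : Matrix (Fin N × Fin N) (Fin N × Fin N) ℂ) :
    flipP N * M = M.submatrix Prod.swap id := by
  rw [flipP_eq_one_submatrix]
  exact one_submatrix_mul id (Equiv.prodComm _ _) M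

theorem flipP_mul_self : flipP N * flipP N = 1 := by
  rw [flipP_mul]
  ext p q
  simp [flipP, one_apply, Prod.ext_iff, and_comm]

theorem flipP_transpose : (flipP N)ᵀ = flipP N := by
  ext p q
  simp [flipP, and_comm, eq_comm]

end Flip

theorem epsSymp_rev (n : ℕ) (i : Fin (2 * n)) : epsSymp n i.rev = -epsSymp n i := by
  have := i.isLt
  simp only [epsSymp, Fin.val_rev]
  split_ifs <;> first | omega | norm_num

theorem flipP_mul_QSymp (n : ℕ) : flipP (2 * n) * QSymp n = -QSymp n := by
  rw [flipP_mul]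
  ext ⟨a, b⟩ q
  simp only [QSymp, submatrix_apply, of_apply, id, Prod.fst_swap, Prod.snd_swap]
  by_cases hab : b = a.rev
  · subst hab
    by_cases hq : q.2 = q.1.rev <;> simp [hq, epsSymp_rev]
  · have hba : a ≠ b.rev := fun h => hab (Fin.rev_eq_iff.mp h.symm)
    simp [hab, hba]

theorem QSymp_transpose (n : ℕ) : (QSymp n)ᵀ = QSymp n := by
  ext p q
  simp only [QSymp, transpose_apply, of_apply, and_comm, mul_comm]

theorem R1Symp_transpose (n : ℕ) : (R1Symp n)ᵀ = R1Symp n := by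
  rw [R1Symp, transpose_add, transpose_sub, transpose_one, transpose_smul, flipP_transpose,
    QSymp_transpose]

theorem flipP_mul_R1Symp (n : ℕ) : flipP (2 * n) * R1Symp n = -R1Symp n := by
  rw [R1Symp, mul_add, mul_sub, mul_one, flipP_mul_self, mul_smul_comm, flipP_mul_QSymp, smul_neg]
  abel

theorem R1Symp_mul_flipP (n : ℕ) : R1Symp n * flipP (2 * n) = -R1Symp n := by
  rw [← transpose_inj, transpose_mul, R1Symp_transpose, flipP_transpose, transpose_neg,
    R1Symp_transpose, flipP_mul_R1Symp]

theorem R1Symp_projector_general (n : ℕ) :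
    ((2 : ℂ)⁻¹ • (1 - flipP (2 * n))) * R1Symp n = R1Symp n ∧
    R1Symp n * ((2 : ℂ)⁻¹ • (1 - flipP (2 * n))) = R1Symp n :=
  ⟨half_one_sub_mul_of_mul_eq_neg (flipP_mul_R1Symp n),
    mul_half_one_sub_of_mul_eq_neg (R1Symp_mul_flipP n)⟩

/-- `R(1)` is unchanged under left or right multiplication by `(1-P)/2`. -/
theorem R1Symp_projector (n : ℕ) (hn : 0 < n) :
    ((2 : ℂ)⁻¹ • (1 - flipP (2 * n))) * R1Symp n = R1Symp n ∧
    R1Symp n * ((2 : ℂ)⁻¹ • (1 - flipP (2 * n))) = R1Symp n :=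
  R1Symp_projector_general n
end
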